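/- arXiv:0705.2867 — 2 statements merged into one kernel-verified Lean document; each statement's English description precedes it below -/
import Mathlib

section
/- Let B ⊆ ℕ^↑ be a 𝔟-scale, let X = B ∪ Q ⊆ Inc with the subspace topology, let Q = {q_n : n ∈ ℕ} be a bijective enumeration of Q, and set U_n = X ∖ {q_n}. Then for every B' ⊆ B with |B'| = 𝔟 and every sequence (V_n)_{n∈ℕ} of clopen subsets of X with V_n ⊆ U_n for all n, there exists x ∈ B' such that the set {n ∈ ℕ : x ∉ V_n} is infinite. -/
open Set Filter Topology

attribute [local instance] Classical.propDecidable

/-- The unbounding number 𝔟: the least cardinality of a `≤*`-unbounded subset of `ℕ^ℕ`. -/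
noncomputable def bCard : Cardinal :=
  sInf {c : Cardinal | ∃ S : Set (ℕ → ℕ), Cardinal.mk ↥S = c ∧
    ∀ g : ℕ → ℕ, ∃ f ∈ S, ¬ ∀ᶠ n in atTop, f n ≤ g n}

/-- A 𝔟-scale: a `≤*`-increasing, `≤*`-unbounded family of strictly increasing functions,
enumerated injectively by the ordinals below 𝔟. -/
structure IsBScale (b : {o : Ordinal // o < bCard.ord} → (ℕ → ℕ)) : Prop where
  strictMono : ∀ α, StrictMono (b α)
  inj : Function.Injective b
  mono : ∀ α β : {o : Ordinal // o < bCard.ord}, α < β → ∀ᶠ n in atTop, b α n ≤ b β n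
  unbounded : ∀ g : ℕ → ℕ, ∃ α, ¬ ∀ᶠ n in atTop, b α n ≤ g n

/-- The set `Inc` of nondecreasing elements of `(ℕ∞)^ℕ`. -/
def Inc : Set (ℕ → ℕ∞) := {x : ℕ → ℕ∞ | Monotone x}

/-- The set `Q` of eventually infinite elements of `Inc`. -/
def Qset : Set (ℕ → ℕ∞) := {x : ℕ → ℕ∞ | Monotone x ∧ ∀ᶠ n in atTop, x n = ⊤}

/-- The inclusion of `ℕ^ℕ` into `(ℕ∞)^ℕ`. -/
def toInc (f : ℕ → ℕ) : ℕ → ℕ∞ := fun n => (f n : ℕ∞)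

/-!
Suppose every `f ∈ B'` lies in `V n` for almost all `n`. Each `V n` is closed in `X` and misses
`q n`, so for some `t n` it misses all points that agree with `q n` where `q n` is finite and
exceed `t n` where `q n = ⊤` (points chosen from these sets converge to `q n` as `t n → ∞`).
If `q n` is the point `(f 0, …, f (m - 1), ⊤, ⊤, …)` of `Q` and `f ∈ V n`, this forces
`f m ≤ t n`. Distinct `m` give distinct `n`, so for almost all `m` the value `f m` is bounded by
a function of `f ↾ m`. A finitely branching recursion turns such a bound into a single function
dominating all these `f`, whereas `B'`, having size `𝔟`, is cofinal in the scale and hence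
unbounded.
-/

open Function Cardinal

lemma exists_forall_eventually_le (G : ℕ → ℕ → ℕ) :
    ∃ g : ℕ → ℕ, ∀ k, ∀ᶠ n in atTop, G k n ≤ g n :=
  ⟨fun n => (Finset.range (n + 1)).sup fun k => G k n, fun k =>
    eventually_atTop.2 ⟨k, fun n hn =>
      Finset.le_sup (f := fun k => G k n) (Finset.mem_range.2 (Nat.lt_succ_of_le hn))⟩⟩

section PrefixBound

variable (h : ∀ m, (Fin m → ℕ) → ℕ)

noncomputable def prefixMax (m v : ℕ) : ℕ :=
  sSup (h m '' Set.pi univ fun _ => Iic v)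

lemma le_prefixMax {m v : ℕ} {s : Fin m → ℕ} (hs : ∀ i, s i ≤ v) : h m s ≤ prefixMax h m v :=
  le_csSup ((Set.Finite.pi fun _ => finite_Iic v).image (h m)).bddAbove
    (mem_image_of_mem _ fun i _ => hs i)

noncomputable def prefixBound (v : ℕ) : ℕ → ℕ
  | 0 => 0
  | m + 1 => max (prefixBound v m) (max v (prefixMax h m (prefixBound v m)))

lemma le_prefixBound {f : ℕ → ℕ} {v : ℕ} (hf : ∀ m, f m ≤ max v (h m fun i => f i)) :
    ∀ m, ∀ j < m, f j ≤ prefixBound h v m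
  | 0, _, hj => absurd hj (Nat.not_lt_zero _)
  | m + 1, j, hj => by
    rcases Nat.lt_succ_iff_lt_or_eq.1 hj with hj | rfl
    · exact (le_prefixBound hf m j hj).trans (le_max_left _ _)
    · exact (hf j).trans <| le_max_of_le_right <| max_le_max le_rfl <|
        le_prefixMax h fun i => le_prefixBound hf j i i.2

lemma exists_eventually_le_of_eventually_le_prefix :
    ∃ g : ℕ → ℕ, ∀ f : ℕ → ℕ,
      (∀ᶠ m in atTop, f m ≤ h m fun i => f i) → ∀ᶠ n in atTop, f n ≤ g n := by
  obtain ⟨g, hg⟩ := exists_forall_eventually_le fun v n => prefixBound h v (n + 1)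
  refine ⟨g, fun f hf => ?_⟩
  obtain ⟨M, hM⟩ := eventually_atTop.1 hf
  have hfv : ∀ m, f m ≤ max ((Finset.range M).sup f) (h m fun i => f i) := fun m =>
    if hm : m < M then le_max_of_le_left (Finset.le_sup (Finset.mem_range.2 hm))
    else le_max_of_le_right (hM m (not_lt.1 hm))
  filter_upwards [hg ((Finset.range M).sup f)] with n hn
  exact (le_prefixBound h hfv (n + 1) n n.lt_succ_self).trans hn

end PrefixBound

def aboveOnTop {ι : Type*} (y : ι → ℕ∞) (t : ℕ) : Set (ι → ℕ∞) :=
  {x | (∀ j, y j ≠ ⊤ → x j = y j) ∧ ∀ j, y j = ⊤ → (t : ℕ∞) < x j}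

lemma IsClosed.exists_disjoint_aboveOnTop {ι : Type*} {C : Set (ι → ℕ∞)} (hC : IsClosed C)
    {y : ι → ℕ∞} (hy : y ∉ C) : ∃ t, Disjoint (aboveOnTop y t) C := by
  by_contra! H
  choose x hx hxC using fun t => not_disjoint_iff.1 (H t)
  refine hy (hC.mem_of_tendsto (b := atTop) (tendsto_pi_nhds.2 fun j => ?_)
    (Eventually.of_forall hxC))
  by_cases hj : y j = ⊤
  · rw [hj, ENat.tendsto_nhds_top_iff_natCast_lt]
    intro n
    filter_upwards [eventually_ge_atTop n] with t ht
    exact (Nat.cast_le.2 ht).trans_lt ((hx t).2 j hj)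
  · simp only [(hx _).1 j hj, tendsto_const_nhds]

def ofPrefix {m : ℕ} (s : Fin m → ℕ) : ℕ → ℕ∞ :=
  fun j => if hj : j < m then s ⟨j, hj⟩ else ⊤

lemma ofPrefix_mem_Qset {f : ℕ → ℕ} (hf : Monotone f) (m : ℕ) :
    ofPrefix (fun i : Fin m => f i) ∈ Qset := by
  refine ⟨fun j k hjk => ?_, eventually_atTop.2 ⟨m, fun j hj => dif_neg (not_lt.2 hj)⟩⟩
  by_cases hk : k < m
  · simpa [ofPrefix, hk, hjk.trans_lt hk] using hf hjk
  · simp [ofPrefix, hk]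

lemma injective_ofPrefix_restrict (f : ℕ → ℕ) :
    Injective fun m => ofPrefix (fun i : Fin m => f i) := by
  have hne : ∀ {m m'}, m < m' →
      ofPrefix (fun i : Fin m => f i) ≠ ofPrefix (fun i : Fin m' => f i) := fun {m _} hlt h => by
    simpa [ofPrefix, hlt] using congrFun h m
  intro m m' h
  rcases lt_trichotomy m m' with hlt | rfl | hgt
  exacts [absurd h (hne hlt), rfl, absurd h.symm (hne hgt)]

lemma toInc_mem_aboveOnTop_ofPrefix {f : ℕ → ℕ} (hf : Monotone f) {m t : ℕ} (ht : t < f m) :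
    toInc f ∈ aboveOnTop (ofPrefix fun i : Fin m => f i) t := by
  refine ⟨fun j hj => ?_, fun j hj => ?_⟩ <;> by_cases hjm : j < m <;>
    simp_all [ofPrefix, toInc]
  exact ht.trans_le (hf hjm)

lemma eventually_le_of_eventually_mem {f : ℕ → ℕ} (hf : Monotone f) {q : ℕ → ℕ → ℕ∞}
    (hq : Qset ⊆ range q) {C : ℕ → Set (ℕ → ℕ∞)} {t : ℕ → ℕ}
    (ht : ∀ n, Disjoint (aboveOnTop (q n) (t n)) (C n)) (hfC : ∀ᶠ n in atTop, toInc f ∈ C n) :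
    ∀ᶠ m in atTop, f m ≤ t (invFun q (ofPrefix fun i : Fin m => f i)) := by
  set n := fun m => invFun q (ofPrefix fun i : Fin m => f i)
  have hqn : ∀ m, q (n m) = ofPrefix fun i : Fin m => f i := fun m =>
    invFun_eq (hq (ofPrefix_mem_Qset hf m))
  have hn : Injective n := Injective.of_comp (f := q) <| by
    simpa only [comp_def, hqn] using injective_ofPrefix_restrict f
  filter_upwards [hn.nat_tendsto_atTop.eventually hfC] with m hm
  by_contra! hlt
  exact disjoint_left.1 (ht (n m)) (hqn m ▸ toInc_mem_aboveOnTop_ofPrefix hf hlt) hm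

lemma exists_le_mem_of_lift_le_mk {c : Cardinal.{u}} {A : Set {o : Ordinal.{u} // o < c.ord}}
    (hA : lift.{u + 1} c ≤ #A) (α : {o : Ordinal.{u} // o < c.ord}) : ∃ β ∈ A, α ≤ β := by
  by_contra! H
  have hAα : #A ≤ lift.{u + 1} α.1.card :=
    calc #A = #(Subtype.val '' A) := (mk_image_eq Subtype.val_injective).symm
      _ ≤ #(Iio α.1) := mk_le_mk_of_subset (by rintro _ ⟨β, hβ, rfl⟩; exact H β hβ)
      _ = lift.{u + 1} α.1.card := mk_Iio_ordinal _
  exact (lt_ord.1 α.2).not_ge (lift_le.1 (hA.trans hAα))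

lemma IsBScale.exists_not_eventually_le {b : {o : Ordinal // o < bCard.ord} → ℕ → ℕ}
    (hb : IsBScale b) {B' : Set (ℕ → ℕ)} (hB' : B' ⊆ range b) (hcard : #B' = bCard)
    (g : ℕ → ℕ) : ∃ f ∈ B', ¬ ∀ᶠ n in atTop, f n ≤ g n := by
  obtain ⟨α, hα⟩ := hb.unbounded g
  obtain ⟨β, hβ, hαβ⟩ := exists_le_mem_of_lift_le_mk (A := b ⁻¹' B')
    (by simpa [hcard] using mk_preimage_of_subset_range_lift b B' hB') α
  refine ⟨b β, hβ, fun hβg => hα ?_⟩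
  rcases hαβ.lt_or_eq with hlt | rfl
  · filter_upwards [hb.mono α β hlt, hβg] with n h₁ h₂ using h₁.trans h₂
  · exact hβg

theorem exists_scale_elt_outside_infinitely_often_general
    (b : {o : Ordinal // o < bCard.ord} → (ℕ → ℕ)) (hb : IsBScale b)
    (X : Set (ℕ → ℕ∞)) (hX : X = toInc '' Set.range b ∪ Qset)
    (q : ℕ → (ℕ → ℕ∞)) (hqrange : Set.range q = Qset)
    (B' : Set (ℕ → ℕ)) (hB' : B' ⊆ Set.range b) (hB'card : Cardinal.mk ↥B' = bCard)
    (V : ℕ → Set (ℕ → ℕ∞))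
    (hVclopen : ∀ n, (∃ O : Set (ℕ → ℕ∞), IsOpen O ∧ V n = O ∩ X) ∧
      (∃ C : Set (ℕ → ℕ∞), IsClosed C ∧ V n = C ∩ X))
    (hVsub : ∀ n, V n ⊆ X \ {q n}) :
    ∃ f ∈ B', {n : ℕ | toInc f ∉ V n}.Infinite := by
  by_contra! hfin
  choose C hC hVC using fun n => (hVclopen n).2
  have hVC' : ∀ n, V n ⊆ C n := fun n => hVC n ▸ inter_subset_left
  have hqC : ∀ n, q n ∉ C n := fun n hqn =>
    (hVsub n (hVC n ▸ ⟨hqn, hX ▸ Or.inr (hqrange ▸ mem_range_self n)⟩)).2 rfl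
  choose t ht using fun n => (hC n).exists_disjoint_aboveOnTop (hqC n)
  obtain ⟨g, hg⟩ := exists_eventually_le_of_eventually_le_prefix
    fun m s => t (invFun q (ofPrefix s))
  obtain ⟨f, hfB', hfg⟩ := hb.exists_not_eventually_le hB' hB'card g
  obtain ⟨α, rfl⟩ := hB' hfB'
  refine hfg (hg _ (eventually_le_of_eventually_mem (hb.strictMono α).monotone hqrange.ge ht ?_))
  filter_upwards [Nat.cofinite_eq_atTop ▸ (hfin _ hfB').eventually_cofinite_notMem]
    with n hn using hVC' n (not_not.1 hn)

/-- Lemma: with `X = B ∪ Q` (`B` a 𝔟-scale), `Q = {q n : n ∈ ℕ}` bijectively enumerated and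
`U n = X ∖ {q n}`: for every `B' ⊆ B` of cardinality 𝔟 and every sequence of sets `V n ⊆ U n`
clopen in `X`, there is `x ∈ B'` such that `{n : x ∉ V n}` is infinite. -/
theorem exists_scale_elt_outside_infinitely_often
    (b : {o : Ordinal // o < bCard.ord} → (ℕ → ℕ)) (hb : IsBScale b)
    (X : Set (ℕ → ℕ∞)) (hX : X = toInc '' Set.range b ∪ Qset)
    (q : ℕ → (ℕ → ℕ∞)) (hqinj : Function.Injective q) (hqrange : Set.range q = Qset)
    (B' : Set (ℕ → ℕ)) (hB' : B' ⊆ Set.range b) (hB'card : Cardinal.mk ↥B' = bCard)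
    (V : ℕ → Set (ℕ → ℕ∞))
    (hVclopen : ∀ n, (∃ O : Set (ℕ → ℕ∞), IsOpen O ∧ V n = O ∩ X) ∧
      (∃ C : Set (ℕ → ℕ∞), IsClosed C ∧ V n = C ∩ X))
    (hVsub : ∀ n, V n ⊆ X \ {q n}) :
    ∃ f ∈ B', {n : ℕ | toInc f ∉ V n}.Infinite :=
  exists_scale_elt_outside_infinitely_often_general b hb X hX q hqrange B' hB' hB'card V hVclopen
    hVsub
end

section
/- Let B ⊆ ℕ^↑ be a 𝔟-scale. Then X = B ∪ Q, with the subspace topology from Inc, satisfies property (θ). -/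
open Set Filter Topology

attribute [local instance] Classical.propDecidable

/-- Property (θ): there are an injectively enumerated open γ-cover `U` of `X` and a countable
`D ⊆ X` such that every clopen refinement of `U` which is a γ-cover of some `Y ⊇ D`
forces `|Y| < |X|`. -/
def PropTheta (X : Type u) [TopologicalSpace X] : Prop :=
  ∃ U : ℕ → Set X, Function.Injective U ∧ (∀ n, IsOpen (U n)) ∧
    (∀ x : X, ∀ᶠ n in atTop, x ∈ U n) ∧
    ∃ D : Set X, D.Countable ∧
      ∀ V : ℕ → Set X, (∀ n, IsClopen (V n)) → (∀ n, V n ⊆ U n) →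
        ∀ Y : Set X, D ⊆ Y → (∀ y ∈ Y, ∀ᶠ n in atTop, y ∈ V n) →
          Cardinal.mk ↥Y < Cardinal.mk X

/-! ### Auxiliary lemmas -/

lemma qset_countable : Qset.Countable := by
  have h : Qset ⊆ ⋃ n : ℕ, {x : ℕ → ℕ∞ | ∀ i, n ≤ i → x i = ⊤} := by
    intro x hx
    obtain ⟨n, hn⟩ := eventually_atTop.1 hx.2
    exact mem_iUnion.2 ⟨n, hn⟩
  refine Set.Countable.mono h (Set.countable_iUnion fun n => ?_)
  rw [← Set.countable_coe_iff]
  have hinj : Function.Injective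
      (fun x : {x : ℕ → ℕ∞ | ∀ i, n ≤ i → x i = ⊤} => (fun i : Fin n => x.1 i)) := by
    intro x y hxy
    apply Subtype.ext
    funext i
    by_cases hi : i < n
    · exact congrFun hxy ⟨i, hi⟩
    · rw [x.2 i (le_of_not_gt hi), y.2 i (le_of_not_gt hi)]
  exact Function.Injective.countable hinj

lemma aleph0_lt_bCard : Cardinal.aleph0 < bCard := by
  have hne : {c : Cardinal | ∃ S : Set (ℕ → ℕ), Cardinal.mk ↥S = c ∧
      ∀ g : ℕ → ℕ, ∃ f ∈ S, ¬ ∀ᶠ n in atTop, f n ≤ g n}.Nonempty := by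
    refine ⟨_, Set.univ, rfl, fun g => ⟨fun n => g n + 1, trivial, fun h => ?_⟩⟩
    obtain ⟨n, hn⟩ := h.exists
    have : g n + 1 ≤ g n := hn
    omega
  have hmem := csInf_mem hne
  obtain ⟨S, hS, hunb⟩ := hmem
  by_contra hle
  push_neg at hle
  have hScount : S.Countable := by
    rw [← Set.countable_coe_iff]
    exact Cardinal.mk_le_aleph0_iff.1 (hS ▸ hle)
  rcases S.eq_empty_or_nonempty with hemp | hne'
  · obtain ⟨f, hf, -⟩ := hunb 0
    rw [hemp] at hf
    exact hf
  · obtain ⟨e, he⟩ := hScount.exists_eq_range hne'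
    obtain ⟨f, hfS, hnf⟩ := hunb (fun n => (Finset.range (n+1)).sup fun j => e j n)
    rw [he] at hfS
    obtain ⟨j, rfl⟩ := hfS
    refine hnf (eventually_atTop.2 ⟨j, fun n hn => ?_⟩)
    exact Finset.le_sup (f := fun j => e j n) (Finset.mem_range.2 (by omega))

lemma toInc_injective : Function.Injective toInc := by
  intro f g hfg
  funext n
  have : (f n : ℕ∞) = (g n : ℕ∞) := congrFun hfg n
  exact_mod_cast this

/-- recursive bound -/
noncomputable def thetaG (N : ℕ → ℕ) (k c : ℕ) : ℕ → ℕ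
  | 0 => c
  | j+1 => (Finset.range (thetaG N k c j + 1)).sup fun v => N (Nat.pair (k+j) v)

noncomputable def thetaBig (N : ℕ → ℕ) (m : ℕ) : ℕ :=
  (Finset.range (m+1)).sup fun k => (Finset.range (m+1)).sup fun c => thetaG N k c (m-k)

lemma thetaG_bound (N : ℕ → ℕ) (f : ℕ → ℕ) (k : ℕ)
    (hf : ∀ j, f (k+j+1) ≤ N (Nat.pair (k+j) (f (k+j)))) :
    ∀ j, f (k+j) ≤ thetaG N k (f k) j := by
  intro j
  induction j with
  | zero => simp [thetaG]
  | succ j ih =>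
      have h1 : f (k+j+1) ≤ N (Nat.pair (k+j) (f (k+j))) := hf j
      have h2 : N (Nat.pair (k+j) (f (k+j))) ≤ thetaG N k (f k) (j+1) := by
        exact Finset.le_sup (f := fun v => N (Nat.pair (k+j) v))
          (b := f (k+j)) (Finset.mem_range.2 (by omega))
      calc f (k+(j+1)) = f (k+j+1) := by ring_nf
        _ ≤ _ := le_trans h1 h2

lemma thetaBig_bound (N : ℕ → ℕ) (f : ℕ → ℕ) (k : ℕ)
    (hf : ∀ j, f (k+j+1) ≤ N (Nat.pair (k+j) (f (k+j)))) :
    ∀ᶠ m in atTop, f m ≤ thetaBig N m := by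
  refine eventually_atTop.2 ⟨max k (f k), fun m hm => ?_⟩
  have hk : k ≤ m := le_trans (le_max_left _ _) hm
  have hc : f k ≤ m := le_trans (le_max_right _ _) hm
  have h1 : f m ≤ thetaG N k (f k) (m - k) := by
    have := thetaG_bound N f k hf (m - k)
    rwa [Nat.add_sub_cancel' hk] at this
  have hm1 : f k ∈ Finset.range (m+1) := Finset.mem_range.2 (by omega)
  have hm2 : k ∈ Finset.range (m+1) := Finset.mem_range.2 (by omega)
  refine le_trans h1 ?_
  refine le_trans (Finset.le_sup (f := fun c => thetaG N k c (m-k)) hm1) ?_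
  exact Finset.le_sup (f := fun k => (Finset.range (m+1)).sup fun c => thetaG N k c (m-k)) hm2


/-- Corollary: if `B` is a 𝔟-scale, then `X = B ∪ Q` satisfies property (θ). -/
theorem bScale_union_Q_satisfies_theta
    (b : {o : Ordinal // o < bCard.ord} → (ℕ → ℕ)) (hb : IsBScale b)
    (X : Set (ℕ → ℕ∞)) (hX : X = toInc '' Set.range b ∪ Qset) :
    PropTheta ↥X := by
  classical
  -- basic facts about X
  have hXmono : ∀ x : ℕ → ℕ∞, x ∈ X → Monotone x := by
    rw [hX]
    rintro x (⟨f, ⟨α, rfl⟩, rfl⟩ | hq)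
    · exact fun i j hij => Nat.cast_le.2 ((hb.strictMono α).monotone hij)
    · exact hq.1
  have hbX : ∀ α, toInc (b α) ∈ X := by
    intro α; rw [hX]; exact Or.inl ⟨b α, ⟨α, rfl⟩, rfl⟩
  have hQX : ∀ q ∈ Qset, q ∈ X := by
    intro q hq; rw [hX]; exact Or.inr hq
  set a : ℕ → ℕ := fun n => (Nat.unpair n).1 with ha_def
  set w : ℕ → ℕ := fun n => (Nat.unpair n).2 with hw_def
  have hpair : ∀ n, Nat.pair (a n) (w n) = n := fun n => Nat.pair_unpair n
  -- the sets E n and the cover U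
  set E : ℕ → Set ↥X := fun n => {x : ↥X | x.1 (a n) = (w n : ℕ∞) ∧ x.1 (a n + 1) = ⊤}
    with hE_def
  set U : ℕ → Set ↥X := fun n => (E n)ᶜ with hU_def
  have hcont : ∀ i : ℕ, Continuous fun x : ↥X => x.1 i :=
    fun i => (continuous_apply i).comp continuous_subtype_val
  have hEclosed : ∀ n, IsClosed (E n) := by
    intro n
    have : E n = (fun x : ↥X => x.1 (a n)) ⁻¹' {((w n : ℕ∞))} ∩
        (fun x : ↥X => x.1 (a n + 1)) ⁻¹' {⊤} := rfl
    rw [this]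
    exact ((isClosed_singleton.preimage (hcont _))).inter
      (isClosed_singleton.preimage (hcont _))
  have hUopen : ∀ n, IsOpen (U n) := fun n => (hEclosed n).isOpen_compl
  -- γ-cover
  have hUgamma : ∀ x : ↥X, ∀ᶠ n in atTop, x ∈ U n := by
    intro x
    have hx2 := hX.subset x.2
    rcases hx2 with ⟨f, ⟨α, rfl⟩, hfx⟩ | hq
    · refine Eventually.of_forall fun n hn => ?_
      have : x.1 (a n + 1) = ⊤ := hn.2
      rw [← hfx] at this
      exact (WithTop.coe_ne_top) this
    · rw [← Nat.cofinite_eq_atTop, Filter.eventually_cofinite]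
      have hsub : {n : ℕ | ¬ x ∈ U n}.Subsingleton := by
        intro m hm n hn
        have hmE : x ∈ E m := not_not.1 hm
        have hnE : x ∈ E n := not_not.1 hn
        have haeq : a m = a n := by
          rcases lt_trichotomy (a m) (a n) with h | h | h
          · exfalso
            have h1 := hq.1 (show a m + 1 ≤ a n by omega)
            rw [hmE.2] at h1
            have := top_le_iff.1 h1
            rw [hnE.1] at this
            exact (WithTop.coe_ne_top) this
          · exact h
          · exfalso
            have h1 := hq.1 (show a n + 1 ≤ a m by omega)
            rw [hnE.2] at h1
            have := top_le_iff.1 h1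
            rw [hmE.1] at this
            exact (WithTop.coe_ne_top) this
        have hweq : w m = w n := by
          have h1 := hmE.1
          have h2 := hnE.1
          rw [haeq] at h1
          rw [h1] at h2
          exact_mod_cast h2
        rw [← hpair m, ← hpair n, haeq, hweq]
      exact hsub.finite
  -- injectivity of U via witnesses q n
  set q : ℕ → (ℕ → ℕ∞) := fun n i => if i ≤ a n then (w n : ℕ∞) else ⊤ with hq_def
  have hqQ : ∀ n, q n ∈ Qset := by
    intro n
    constructor
    · intro i j hij
      by_cases hi : i ≤ a n <;> by_cases hj : j ≤ a n
      · simp only [hq_def, if_pos hi, if_pos hj, le_refl]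
      · simp only [hq_def, if_pos hi, if_neg hj, le_top]
      · exact absurd (le_trans hij hj) hi
      · simp only [hq_def, if_neg hi, if_neg hj, le_refl]
    · exact eventually_atTop.2 ⟨a n + 1, fun i hi => if_neg (by omega)⟩
  have hqE : ∀ n m, (⟨q n, hQX _ (hqQ n)⟩ : ↥X) ∈ E m → n = m := by
    intro n m hmem
    have h1 : q n (a m) = (w m : ℕ∞) := hmem.1
    have h2 : q n (a m + 1) = ⊤ := hmem.2
    have han : a n ≤ a m := by
      by_contra hcon
      push_neg at hcon
      rw [hq_def] at h2
      simp only [if_pos (show a m + 1 ≤ a n by omega)] at h2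
      exact (WithTop.coe_ne_top) h2
    have ham : a m ≤ a n ∧ w n = w m := by
      by_cases hcase : a m ≤ a n
      · refine ⟨hcase, ?_⟩
        rw [hq_def] at h1
        simp only [if_pos hcase] at h1
        exact_mod_cast h1
      · exfalso
        rw [hq_def] at h1
        simp only [if_neg hcase] at h1
        exact (WithTop.coe_ne_top) h1.symm
    rw [← hpair n, ← hpair m, le_antisymm han ham.1, ham.2]
  have hqEn : ∀ n, (⟨q n, hQX _ (hqQ n)⟩ : ↥X) ∈ E n := by
    intro n
    constructor
    · simp only [hq_def, if_pos (le_refl (a n))]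
    · simp only [hq_def, if_neg (show ¬ (a n + 1 ≤ a n) by omega)]
  have hUinj : Function.Injective U := by
    intro n m hnm
    by_contra hne
    have h1 : (⟨q n, hQX _ (hqQ n)⟩ : ↥X) ∉ U n := not_not.2 (hqEn n)
    rw [hnm] at h1
    exact h1 (fun hEm => hne (hqE n m hEm))
  -- countable D
  refine ⟨U, hUinj, hUopen, hUgamma, Subtype.val ⁻¹' Qset, 
    (qset_countable).preimage Subtype.val_injective, ?_⟩
  intro V hVclop hVU Y hDY hYcov
  -- Step A: uniform bounds from clopenness
  have hN : ∀ n, ∃ N : ℕ, ∀ x ∈ V n, x.1 (a n) = (w n : ℕ∞) → x.1 (a n + 1) ≤ (N : ℕ∞) := by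
    intro n
    by_contra hc
    push_neg at hc
    choose x hxV hxa hxb using hc
    set 𝒰 : Ultrafilter ℕ := Ultrafilter.of atTop with h𝒰_def
    have h𝒰 : (𝒰 : Filter ℕ) ≤ atTop := Ultrafilter.of_le _
    have hconv : ∀ i : ℕ, ∃ y : ℕ∞, Tendsto (fun N => (x N).1 i) 𝒰 (𝓝 y) := by
      intro i
      obtain ⟨y, -, hy⟩ := isCompact_univ.ultrafilter_le_nhds
        (𝒰.map fun N => (x N).1 i) (by simp)
      exact ⟨y, by rwa [Ultrafilter.coe_map] at hy⟩
    choose e he using hconv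
    have hemono : Monotone e := fun i j hij =>
      le_of_tendsto_of_tendsto' (he i) (he j) (fun N => hXmono _ (x N).2 hij)
    have hea : e (a n) = (w n : ℕ∞) := by
      refine tendsto_nhds_unique (he _) ?_
      simp only [hxa]
      exact tendsto_const_nhds
    have heb : e (a n + 1) = ⊤ := by
      refine tendsto_nhds_unique (he _) ?_
      rw [ENat.tendsto_nhds_top_iff_natCast_lt]
      intro m
      refine h𝒰 (eventually_atTop.2 ⟨m, fun N hN => ?_⟩)
      exact lt_of_le_of_lt (Nat.cast_le.2 hN) (hxb N)
    have heQ : e ∈ Qset := by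
      refine ⟨hemono, eventually_atTop.2 ⟨a n + 1, fun i hi => ?_⟩⟩
      have := hemono hi
      rw [heb] at this
      exact top_le_iff.1 this
    have htend : Tendsto (fun N => x N) 𝒰 (𝓝 (⟨e, hQX _ heQ⟩ : ↥X)) :=
      tendsto_subtype_rng.2 (tendsto_pi_nhds.2 he)
    have heV : (⟨e, hQX _ heQ⟩ : ↥X) ∈ V n :=
      (hVclop n).isClosed.mem_of_tendsto htend (Eventually.of_forall hxV)
    exact hVU n heV ⟨hea, heb⟩
  choose N hNspec using hN
  -- Step B: every b α in Y is bounded by thetaBig N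
  have key : ∀ α, (⟨toInc (b α), hbX α⟩ : ↥X) ∈ Y →
      ∀ᶠ m in atTop, b α m ≤ thetaBig N m := by
    intro α hαY
    obtain ⟨k, hk⟩ := eventually_atTop.1 (hYcov _ hαY)
    refine thetaBig_bound N (b α) k fun j => ?_
    set n := Nat.pair (k+j) (b α (k+j)) with hn_def
    have han : a n = k + j := by simp [ha_def, hn_def, Nat.unpair_pair]
    have hwn : w n = b α (k+j) := by simp [hw_def, hn_def, Nat.unpair_pair]
    have hkn : k ≤ n := le_trans (by omega) (Nat.left_le_pair (k+j) (b α (k+j)))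
    have hyV := hk n hkn
    have hspec := hNspec n _ hyV (by
      show toInc (b α) (a n) = (w n : ℕ∞)
      rw [han, hwn]; rfl)
    rw [han] at hspec
    have : ((b α (k+j+1) : ℕ∞)) ≤ (N n : ℕ∞) := hspec
    exact_mod_cast this
  -- Step C: the set of indices is bounded
  obtain ⟨α₀, hα₀⟩ := hb.unbounded (thetaBig N)
  have hA : ∀ α, (⟨toInc (b α), hbX α⟩ : ↥X) ∈ Y → α < α₀ := by
    intro α hαY
    rcases lt_trichotomy α α₀ with h | h | h
    · exact h
    · exact absurd (h ▸ key α hαY) hα₀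
    · exfalso
      refine hα₀ (((hb.mono α₀ α h).and (key α hαY)).mono fun n hn => le_trans hn.1 hn.2)
  -- Step D: cardinality count
  set Y₁ : Set ↥X := {y ∈ Y | y.1 ∈ toInc '' Set.range b} with hY₁_def
  set Y₂ : Set ↥X := {y ∈ Y | y.1 ∈ Qset} with hY₂_def
  have hYsub : Y ⊆ Y₁ ∪ Y₂ := by
    intro y hy
    rcases hX.subset y.2 with h | h
    · exact Or.inl ⟨hy, h⟩
    · exact Or.inr ⟨hy, h⟩
  have hY₂count : Y₂.Countable :=
    Set.Countable.mono (fun y hy => hy.2) ((qset_countable).preimage Subtype.val_injective)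
  -- injection of Y₁ into the initial segment below α₀
  have hchoice : ∀ y : ↥Y₁, ∃ α, toInc (b α) = (y : ↥X).1 ∧ α < α₀ := by
    rintro ⟨y, hyY, f, ⟨α, rfl⟩, hfy⟩
    refine ⟨α, hfy, ?_⟩
    apply hA
    have : (⟨toInc (b α), hbX α⟩ : ↥X) = y := Subtype.ext hfy
    rwa [this]
  choose φ hφ1 hφ2 using hchoice
  have hφinj : Function.Injective φ := by
    intro y y' hyy'
    apply Subtype.ext
    apply Subtype.ext
    rw [← hφ1 y, ← hφ1 y', hyy']
  have hemb : Nonempty (↥Y₁ ↪ {p : Ordinal // p < α₀.1}) := by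
    refine ⟨⟨fun y => ⟨(φ y).1, hφ2 y⟩, ?_⟩⟩
    intro y y' h
    exact hφinj (Subtype.ext (Subtype.mk_eq_mk.1 h))
  -- cardinal arithmetic (in Cardinal.{1})
  have h1 : Cardinal.lift.{1} (Cardinal.mk ↥Y₁) ≤
      Cardinal.lift.{0} (Cardinal.mk {p : Ordinal // p < α₀.1}) :=
    Cardinal.lift_mk_le'.2 hemb
  have h2 : Cardinal.mk {p : Ordinal // p < α₀.1} = Cardinal.lift.{1} (α₀.1).card :=
    Ordinal.mk_Iio_ordinal α₀.1
  have h3 : (α₀.1).card < bCard := Cardinal.lt_ord.1 α₀.2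
  have hY₁lt : Cardinal.lift.{1} (Cardinal.mk ↥Y₁) < Cardinal.lift.{1} bCard := by
    rw [h2] at h1
    calc Cardinal.lift.{1} (Cardinal.mk ↥Y₁)
        ≤ Cardinal.lift.{0} (Cardinal.lift.{1} (α₀.1).card) := h1
      _ = Cardinal.lift.{1} (α₀.1).card := by rw [Cardinal.lift_lift]
      _ < Cardinal.lift.{1} bCard := Cardinal.lift_lt.2 h3
  have hXge : Cardinal.lift.{1} bCard ≤ Cardinal.lift.{1} (Cardinal.mk ↥X) := by
    have hemb2 : Nonempty ({o : Ordinal // o < bCard.ord} ↪ ↥X) := by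
      refine ⟨⟨fun α => ⟨toInc (b α), hbX α⟩, ?_⟩⟩
      intro α β h
      exact hb.inj (toInc_injective (congrArg Subtype.val h))
    have h4 := Cardinal.lift_mk_le'.2 hemb2
    have h5 : Cardinal.mk {o : Ordinal // o < bCard.ord} = Cardinal.lift.{1} bCard := by
      have := Ordinal.mk_Iio_ordinal bCard.ord
      rw [Cardinal.card_ord] at this
      exact this
    rw [h5, Cardinal.lift_lift] at h4
    exact h4
  have hfinal : Cardinal.lift.{1} (Cardinal.mk ↥Y) < Cardinal.lift.{1} (Cardinal.mk ↥X) := by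
    have hYle : Cardinal.mk ↥Y ≤ Cardinal.mk ↥Y₁ + Cardinal.mk ↥Y₂ :=
      le_trans (Cardinal.mk_le_mk_of_subset hYsub) (Cardinal.mk_union_le _ _)
    have hY₂le : Cardinal.mk ↥Y₂ ≤ Cardinal.aleph0 := hY₂count.le_aleph0
    have haleph : Cardinal.aleph0 < Cardinal.lift.{1} bCard := by
      have := Cardinal.lift_lt.2 aleph0_lt_bCard
      rwa [Cardinal.lift_aleph0] at this
    calc Cardinal.lift.{1} (Cardinal.mk ↥Y)
        ≤ Cardinal.lift.{1} (Cardinal.mk ↥Y₁ + Cardinal.mk ↥Y₂) := Cardinal.lift_le.2 hYle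
      _ = Cardinal.lift.{1} (Cardinal.mk ↥Y₁) + Cardinal.lift.{1} (Cardinal.mk ↥Y₂) :=
          Cardinal.lift_add _ _
      _ < Cardinal.lift.{1} bCard := by
          refine Cardinal.add_lt_of_lt (le_of_lt haleph) hY₁lt ?_
          calc Cardinal.lift.{1} (Cardinal.mk ↥Y₂) ≤ Cardinal.lift.{1} Cardinal.aleph0 :=
                Cardinal.lift_le.2 hY₂le
            _ = Cardinal.aleph0 := Cardinal.lift_aleph0
            _ < Cardinal.lift.{1} bCard := haleph
      _ ≤ Cardinal.lift.{1} (Cardinal.mk ↥X) := hXge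
  exact Cardinal.lift_lt.1 hfinal
end
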